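/- arXiv:cs/0605019 — 2 statements merged into one kernel-verified Lean document; each statement's English description precedes it below -/
import Mathlib

section
/- The exponential generating function p(x) = Σ_{n≥1} n^{n-1} x^n/n! of labeled rooted trees satisfies the functional equation p(x) = x·exp(p(x)) as an identity of formal power series. -/
open Nat Real Filter

/-- The exponential generating function of labeled rooted trees. -/
noncomputable def treeSeries : PowerSeries ℚ :=
  PowerSeries.mk fun n => if n = 0 then 0 else (n : ℚ) ^ (n - 1) / n !

/-- The composition `exp ∘ p` for a power series `p` with zero constant coefficient:
its `n`-th coefficient is `∑_{k ≤ n} [x^n] (p^k) / k!`. -/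
noncomputable def expComp (p : PowerSeries ℚ) : PowerSeries ℚ :=
  PowerSeries.mk fun n => ∑ k ∈ Finset.range (n + 1), PowerSeries.coeff (R := ℚ) n (p ^ k) / k !

/-!
The Abel polynomials `A₀ = 1`, `Aₙ = X (X + n)^(n-1)` encode the powers of the tree
series `p`: `m! [xᵐ] pᵏ = k! [Xᵏ] Aₘ` (both count rooted forests on `m` labelled vertices with
`k` ordered trees). This follows by induction on `k` from the convolution identity
`∑ⱼ C(m+1, j+1) (j+1)^j A_{m-j}(X) = (m+1) Aₘ(X+1)`, whose two sides have equal derivatives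
and agree at `0`. Summing over `k` gives `[xᵐ] exp p = Aₘ(1) / m! = (m+1)^(m-1) / m!`, which is
`[x^(m+1)] p`.
-/

section Abel

open Polynomial

variable {R : Type*} [CommRing R]

lemma Polynomial.eq_of_derivative_eq_of_eval_zero_eq [IsAddTorsionFree R] {p q : R[X]}
    (hd : derivative p = derivative q) (h0 : p.eval 0 = q.eval 0) : p = q := by
  have hc := eq_C_of_derivative_eq_zero (p := p - q) (by rw [derivative_sub, hd, sub_self])
  rw [coeff_zero_eq_eval_zero, eval_sub, h0, sub_self, map_zero] at hc
  exact sub_eq_zero.mp hc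

variable (R) in
noncomputable def abelPoly : ℕ → R[X]
  | 0 => 1
  | n + 1 => X * (X + C ((n : R) + 1)) ^ n

@[simp] lemma abelPoly_zero : abelPoly R 0 = 1 := rfl

lemma abelPoly_succ (n : ℕ) : abelPoly R (n + 1) = X * (X + C ((n : R) + 1)) ^ n := rfl

@[simp] lemma eval_zero_abelPoly_succ (n : ℕ) : (abelPoly R (n + 1)).eval 0 = 0 := by
  simp [abelPoly_succ]

lemma eval_one_abelPoly_succ (n : ℕ) : (abelPoly R (n + 1)).eval 1 = ((n : R) + 2) ^ n := by
  simp [abelPoly_succ]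
  ring

lemma natDegree_abelPoly_le (n : ℕ) : (abelPoly R n).natDegree ≤ n := by
  cases n with
  | zero => simp
  | succ n =>
    rw [abelPoly_succ]
    compute_degree
    omega

lemma derivative_abelPoly_succ (n : ℕ) :
    derivative (abelPoly R (n + 1)) = (n + 1) • (abelPoly R n).comp (X + 1) := by
  cases n with
  | zero => simp [abelPoly_succ]
  | succ n =>
    rw [abelPoly_succ, abelPoly_succ, derivative_mul, derivative_pow, derivative_add,
      derivative_X, derivative_C, mul_comp, pow_comp, add_comp, X_comp, C_comp, nsmul_eq_mul]
    simp only [map_add, map_one, map_natCast, Nat.cast_add, Nat.cast_one, add_tsub_cancel_right]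
    ring

lemma sum_choose_smul_abelPoly [IsAddTorsionFree R] (m : ℕ) :
    ∑ j ∈ Finset.range (m + 1), ((m + 1).choose (j + 1) * (j + 1) ^ j) • abelPoly R (m - j)
      = (m + 1) • (abelPoly R m).comp (X + 1) := by
  induction m with
  | zero => simp
  | succ m ih =>
    have hderiv : ∀ j ∈ Finset.range (m + 1),
        derivative (((m + 2).choose (j + 1) * (j + 1) ^ j) • abelPoly R (m + 1 - j)) =
          (m + 2) •
            (((m + 1).choose (j + 1) * (j + 1) ^ j) • abelPoly R (m - j)).comp (X + 1) := by
      intro j hj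
      obtain ⟨d, rfl⟩ : ∃ d, m = j + d := ⟨m - j, by simp at hj; omega⟩
      have hchoose := Nat.choose_mul_succ_eq (j + d + 1) (j + 1)
      rw [show j + d + 1 + 1 - (j + 1) = d + 1 by omega] at hchoose
      rw [show j + d + 1 - j = d + 1 by omega, show j + d - j = d by omega, derivative_smul,
        derivative_abelPoly_succ, smul_comp, smul_smul, smul_smul, mul_right_comm, ← hchoose]
      ring_nf
    apply eq_of_derivative_eq_of_eval_zero_eq
    · rw [derivative_sum, Finset.sum_range_succ, Nat.sub_self, abelPoly_zero, derivative_smul,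
        derivative_one, smul_zero, add_zero, Finset.sum_congr rfl hderiv, ← Finset.smul_sum,
        ← sum_comp, ih, derivative_smul, derivative_comp, derivative_abelPoly_succ]
      simp only [derivative_add, derivative_X, derivative_one, add_zero, one_mul, smul_comp]
    · rw [eval_finsetSum, Finset.sum_range_succ, Finset.sum_eq_zero]
      · simp [eval_one_abelPoly_succ]
        ring
      · intro j hj
        rw [show m + 1 - j = m - j + 1 by simp at hj; omega, eval_smul, eval_zero_abelPoly_succ,
          smul_zero]

lemma coeff_abelPoly_succ_succ [IsAddTorsionFree R] (m k : ℕ) :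
    (abelPoly R (m + 1)).coeff (k + 1) * (k + 1)
      = ∑ j ∈ Finset.range (m + 1),
          ((m + 1).choose (j + 1) * (j + 1) ^ j) • (abelPoly R (m - j)).coeff k := by
  rw [← coeff_derivative, derivative_abelPoly_succ, ← sum_choose_smul_abelPoly, finsetSum_coeff]
  simp only [coeff_smul]

end Abel

section TreeSeries

open PowerSeries Finset

lemma PowerSeries.coeff_succ_mul_of_constantCoeff_eq_zero {R : Type*} [CommSemiring R]
    {f : PowerSeries R} (hf : constantCoeff f = 0) (g : PowerSeries R) (n : ℕ) :
    coeff (n + 1) (f * g) = ∑ p ∈ antidiagonal n, coeff (p.1 + 1) f * coeff p.2 g := by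
  rw [coeff_mul, Nat.sum_antidiagonal_succ, coeff_zero_eq_constantCoeff_apply, hf, zero_mul,
    zero_add]

@[simp] lemma constantCoeff_treeSeries : constantCoeff treeSeries = 0 := by
  simp [treeSeries, ← coeff_zero_eq_constantCoeff_apply]

lemma coeff_succ_treeSeries (n : ℕ) :
    coeff (n + 1) treeSeries = ((n : ℚ) + 1) ^ n / (n + 1)! := by
  simp [treeSeries]

lemma coeff_treeSeries_pow (k m : ℕ) :
    coeff m (treeSeries ^ k) = k ! / m ! * (abelPoly ℚ m).coeff k := by
  induction k generalizing m with
  | zero => cases m <;> simp [PowerSeries.coeff_one, Polynomial.coeff_zero_eq_eval_zero]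
  | succ k ih =>
    cases m with
    | zero => simp [Polynomial.coeff_one]
    | succ l =>
      have hA : (abelPoly ℚ (l + 1)).coeff (k + 1) = (∑ j ∈ range (l + 1),
          ((l + 1).choose (j + 1) * (j + 1) ^ j) • (abelPoly ℚ (l - j)).coeff k) / (k + 1) := by
        rw [← coeff_abelPoly_succ_succ]
        field_simp
      rw [_root_.pow_succ', coeff_succ_mul_of_constantCoeff_eq_zero constantCoeff_treeSeries,
        Nat.sum_antidiagonal_eq_sum_range_succ_mk, hA, sum_div, mul_sum]
      refine sum_congr rfl fun i hi => ?_
      have hi : i ≤ l := Nat.lt_succ_iff.mp (mem_range.mp hi)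
      rw [coeff_succ_treeSeries, ih, nsmul_eq_mul, Nat.cast_mul,
        Nat.cast_choose ℚ (by omega : i + 1 ≤ l + 1), show l + 1 - (i + 1) = l - i by omega,
        Nat.factorial_succ k]
      push_cast
      field_simp

lemma coeff_expComp_treeSeries (m : ℕ) :
    coeff m (expComp treeSeries) = (abelPoly ℚ m).eval 1 / m ! := by
  rw [expComp, coeff_mk,
    Polynomial.eval_eq_sum_range' (Nat.lt_succ_of_le (natDegree_abelPoly_le m)), sum_div]
  refine sum_congr rfl fun k _ => ?_
  rw [coeff_treeSeries_pow, one_pow, mul_one]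
  field_simp

end TreeSeries

/-- The EGF `p(x) = ∑_{n≥1} n^(n-1) x^n / n!` of labeled rooted trees satisfies the
functional equation `p = x · exp(p)` as formal power series. -/
theorem stmt_3 : treeSeries = PowerSeries.X * expComp treeSeries := by
  ext n
  cases n with
  | zero => simp
  | succ m =>
    rw [PowerSeries.coeff_succ_X_mul, coeff_expComp_treeSeries, coeff_succ_treeSeries]
    cases m with
    | zero => simp
    | succ l =>
      rw [eval_one_abelPoly_succ, Nat.factorial_succ (l + 1)]
      push_cast
      field_simp
      ring
end

section
/- Let F: ℝ_{≥0} → ℝ be a power series with non-negative coefficients, F(y) = Σ c_k y^k with c_0 > 0 and c_j > 0 for some j ≥ 2, and consider solutions y(x) of y = x·F(y) with y(0)=0 and non-negative Taylor coefficients. If y(x) has finite radius of convergence x_0 and y(x_0) := lim_{x→x_0^-} y(x) is finite and (x_0, y(x_0)) lies strictly inside the region of convergence of (x,y) ↦ x F(y), then 1 − x_0·F'(y(x_0)) = 0. -/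
/-!
Write `y(x) = ∑ aₙ xⁿ`, `F(t) = ∑ cₖ tᵏ` and `Y₀ = y(x₀)`. By Abel continuity `Y₀ = x₀ F(Y₀)`.
Comparing two points of the curve `y = x F(y)` through the convexity of `F` gives
`x F'(y(x)) ≤ 1` for `x < x₀`, hence `x₀ F'(Y₀) ≤ 1`. Conversely, if `x₀ F'(Y₀) < 1`, convexity
gives `Y > Y₀` with `x₀ F(Y) < Y`, so `x₁ = Y / F(Y) > x₀` satisfies `x₁ F(Y) = Y`. By the
identity theorem the coefficients of `y` obey `aₙ₊₁ = [xⁿ] F(y)`, and induction then bounds the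
partial sums of `y(x₁)` by `Y`: the series of `y` converges beyond its radius `x₀`.
-/

open Finset Filter Topology Set PowerSeries

namespace PowerSeries

theorem coeff_mk_mul_pow_pow {R : Type*} [CommSemiring R] (u : ℕ → R) (x : R) (k n : ℕ) :
    coeff n (mk (fun m => u m * x ^ m) ^ k) = coeff n (mk u ^ k) * x ^ n := by
  have hmk : mk (fun m => u m * x ^ m) = rescale x (mk u) := by
    ext m; simp [mul_comm]
  rw [hmk, ← map_pow, coeff_rescale, mul_comm]

theorem coeff_mk_pow_nonneg {R : Type*} [CommSemiring R] [PartialOrder R] [IsOrderedRing R]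
    {u : ℕ → R} (hu : ∀ n, 0 ≤ u n) (k n : ℕ) : 0 ≤ coeff n (mk u ^ k) := by
  induction k generalizing n with
  | zero => rw [pow_zero, coeff_one]; split_ifs <;> simp
  | succ k ih =>
    rw [pow_succ, coeff_mul]
    exact sum_nonneg fun p _ => mul_nonneg (ih p.1) (by rw [coeff_mk]; exact hu p.2)

theorem hasSum_coeff_mk_pow {u : ℕ → ℝ} (hu : Summable u) (k : ℕ) :
    HasSum (fun n => coeff n (mk u ^ k)) ((∑' n, u n) ^ k) := by
  induction k with
  | zero => simpa [coeff_one] using hasSum_ite_eq 0 (1 : ℝ)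
  | succ k ih =>
    have hf : Summable fun n => ‖coeff n (mk u ^ k)‖ := summable_abs_iff.2 ih.summable
    have hg : Summable fun n => ‖u n‖ := summable_abs_iff.2 hu
    have hcoeff : (fun n => coeff n (mk u ^ (k + 1))) =
        fun n => ∑ p ∈ antidiagonal n, coeff p.1 (mk u ^ k) * u p.2 := by
      ext n; simp [pow_succ, coeff_mul]
    rw [hcoeff, pow_succ, ← ih.tsum_eq,
      tsum_mul_tsum_eq_tsum_sum_antidiagonal_of_summable_norm hf hg]
    exact (summable_norm_sum_mul_antidiagonal_of_summable_norm hf hg).of_norm.hasSum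

theorem sum_range_coeff_mk_pow_le {u : ℕ → ℝ} (hu : ∀ n, 0 ≤ u n) (k N : ℕ) :
    ∑ n ∈ range N, coeff n (mk u ^ k) ≤ (∑ n ∈ range N, u n) ^ k := by
  set v : ℕ → ℝ := fun m => if m < N then u m else 0
  have htrunc : (trunc N (mk u) : ℝ⟦X⟧) = mk v := by ext m; simp [v, coeff_trunc]
  have hv : ∀ m, 0 ≤ v m := fun m => by dsimp only [v]; split_ifs <;> simp [hu]
  have hsum : HasSum v (∑ n ∈ range N, v n) :=
    hasSum_sum_of_ne_finset_zero fun m hm => if_neg (by simpa using hm)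
  have hvu : ∑ n ∈ range N, v n = ∑ n ∈ range N, u n :=
    sum_congr rfl fun m hm => if_pos (mem_range.1 hm)
  calc ∑ n ∈ range N, coeff n (mk u ^ k)
      = ∑ n ∈ range N, coeff n (mk v ^ k) := sum_congr rfl fun n hn => by
        rw [← htrunc, ← coeff_coe_trunc_of_lt (f := mk u ^ k) (mem_range.1 hn),
          ← trunc_trunc_pow, coeff_coe_trunc_of_lt (mem_range.1 hn)]
    _ ≤ (∑ n ∈ range N, u n) ^ k := by
        rw [← hvu, ← hsum.tsum_eq]
        exact sum_le_hasSum _ (fun n _ => coeff_mk_pow_nonneg hv k n)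
          (hasSum_coeff_mk_pow hsum.summable k)

theorem hasSum_mul_coeff_mk_pow {c u : ℕ → ℝ} (hc : ∀ k, 0 ≤ c k) (hu : ∀ n, 0 ≤ u n)
    (hus : Summable u) (hcu : Summable fun k => c k * (∑' n, u n) ^ k) :
    HasSum (fun p : ℕ × ℕ => c p.1 * coeff p.2 (mk u ^ p.1)) (∑' k, c k * (∑' n, u n) ^ k) := by
  have hrow : ∀ k, HasSum (fun n => c k * coeff n (mk u ^ k)) (c k * (∑' n, u n) ^ k) :=
    fun k => (hasSum_coeff_mk_pow hus k).mul_left (c k)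
  have hS : Summable fun p : ℕ × ℕ => c p.1 * coeff p.2 (mk u ^ p.1) :=
    (summable_prod_of_nonneg fun p => mul_nonneg (hc _) (coeff_mk_pow_nonneg hu _ _)).2
      ⟨fun k => (hrow k).summable, by simpa only [(hrow _).tsum_eq] using hcu⟩
  rw [← tsum_congr fun k => (hrow k).tsum_eq, ← hS.tsum_prod' fun k => (hrow k).summable]
  exact hS.hasSum

end PowerSeries

theorem eq_of_tsum_mul_pow_eq {f g : ℕ → ℝ} {r : ℝ} (hr : 0 < r)
    (hf : Summable fun n => ‖f n‖ * r ^ n) (hg : Summable fun n => ‖g n‖ * r ^ n)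
    (h : ∀ x ∈ Ioo 0 r, ∑' n, f n * x ^ n = ∑' n, g n * x ^ n) : f = g := by
  set p := FormalMultilinearSeries.ofScalars ℝ (f - g)
  have hrad : (r.toNNReal : ENNReal) ≤ p.radius := by
    refine p.le_radius_of_summable_norm ?_
    rw [Real.coe_toNNReal _ hr.le]
    refine (hf.add hg).of_nonneg_of_le (fun n => by positivity) fun n => ?_
    rw [FormalMultilinearSeries.ofScalars_norm, ← add_mul]
    exact mul_le_mul_of_nonneg_right (norm_sub_le (f n) (g n)) (by positivity)
  have hp : HasFPowerSeriesAt p.sum p 0 :=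
    (p.hasFPowerSeriesOnBall (lt_of_lt_of_le (by simpa using hr) hrad)).hasFPowerSeriesAt
  have hsummable : ∀ {e : ℕ → ℝ}, (Summable fun n => ‖e n‖ * r ^ n) → ∀ x ∈ Ioo 0 r,
      Summable fun n => e n * x ^ n := fun he x hx =>
    he.of_norm_bounded fun n => by
      rw [norm_mul, norm_pow, Real.norm_of_nonneg hx.1.le]
      exact mul_le_mul_of_nonneg_left (pow_le_pow_left₀ hx.1.le hx.2.le n) (norm_nonneg _)
  have hzero : ∀ x ∈ Ioo 0 r, p.sum x = 0 := fun x hx => by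
    rw [← FormalMultilinearSeries.ofScalarsSum, FormalMultilinearSeries.ofScalars_sum_eq]
    simp only [Pi.sub_apply, smul_eq_mul, sub_mul]
    rw [(hsummable hf x hx).tsum_sub (hsummable hg x hx), h x hx, sub_self]
  have hfreq : ∃ᶠ x in 𝓝[≠] (0 : ℝ), p.sum x = 0 :=
    ((eventually_of_mem (Ioo_mem_nhdsGT hr) hzero).frequently).filter_mono
      (nhdsWithin_mono _ fun x hx => ne_of_gt hx)
  have hp0 := hp.eq_zero_of_eventually (hp.analyticAt.frequently_zero_iff_eventually_zero.1 hfreq)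
  exact sub_eq_zero.1 ((FormalMultilinearSeries.ofScalars_series_eq_zero _).1 hp0)

noncomputable def powSum (c : ℕ → ℝ) (t : ℝ) : ℝ := ∑' k, c k * t ^ k

/-- The termwise derivative; the truncated `k - 1` only occurs in the vanishing term `k = 0`. -/
noncomputable def powSumDeriv (c : ℕ → ℝ) (t : ℝ) : ℝ := ∑' k : ℕ, (k : ℝ) * c k * t ^ (k - 1)

theorem nat_mul_pow_sub_one_mul_le_pow_sub_pow {u v : ℝ} (hu : 0 ≤ u) (huv : u ≤ v) (n : ℕ) :
    n * u ^ (n - 1) * (v - u) ≤ v ^ n - u ^ n := by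
  have := pow_add_mul_le_add_pow hu (by linarith : 0 ≤ 2 * u + (v - u)) n
  rw [add_sub_cancel] at this
  linarith

theorem pow_sub_pow_le_nat_mul_pow_sub_one_mul {u v : ℝ} (hu : 0 ≤ u) (huv : u ≤ v) (n : ℕ) :
    v ^ n - u ^ n ≤ n * v ^ (n - 1) * (v - u) := by
  have := pow_add_mul_le_add_pow (hu.trans huv) (by linarith : 0 ≤ 2 * v + (u - v)) n
  rw [add_sub_cancel] at this
  linarith

section NonnegCoeff

variable {c : ℕ → ℝ} {R : ℝ}

theorem summable_mul_pow_of_le (hc : ∀ k, 0 ≤ c k) (hR : Summable fun k => c k * R ^ k)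
    {t : ℝ} (ht : 0 ≤ t) (htR : t ≤ R) : Summable fun k => c k * t ^ k :=
  hR.of_nonneg_of_le (fun k => by have := hc k; positivity)
    fun k => mul_le_mul_of_nonneg_left (pow_le_pow_left₀ ht htR k) (hc k)

theorem powSum_nonneg (hc : ∀ k, 0 ≤ c k) {t : ℝ} (ht : 0 ≤ t) : 0 ≤ powSum c t :=
  tsum_nonneg fun k => by have := hc k; positivity

theorem coeff_zero_le_powSum (hc : ∀ k, 0 ≤ c k) {t : ℝ} (ht : 0 ≤ t)
    (hs : Summable fun k => c k * t ^ k) : c 0 ≤ powSum c t := by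
  simpa [powSum] using hs.le_tsum 0 fun k _ => mul_nonneg (hc k) (pow_nonneg ht k)

theorem monotoneOn_powSum (hc : ∀ k, 0 ≤ c k) (hR : Summable fun k => c k * R ^ k) :
    MonotoneOn (powSum c) (Icc 0 R) := fun _ hu _ hv huv =>
  Summable.tsum_le_tsum (fun k => mul_le_mul_of_nonneg_left (pow_le_pow_left₀ hu.1 huv k) (hc k))
    (summable_mul_pow_of_le hc hR hu.1 hu.2) (summable_mul_pow_of_le hc hR hv.1 hv.2)

theorem continuousOn_powSum (hc : ∀ k, 0 ≤ c k) (hR : Summable fun k => c k * R ^ k) :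
    ContinuousOn (powSum c) (Icc 0 R) :=
  continuousOn_tsum (fun k => (continuous_const.mul (continuous_pow k)).continuousOn) hR
    fun k t ht => by
      rw [Real.norm_of_nonneg (by have := hc k; have := ht.1; positivity)]
      exact mul_le_mul_of_nonneg_left (pow_le_pow_left₀ ht.1 ht.2 k) (hc k)

/-- Termwise, `k t^(k-1) (R - t) ≤ R^k - t^k ≤ R^k`. -/
theorem summable_nat_mul_mul_pow_sub_one (hc : ∀ k, 0 ≤ c k) (hR : Summable fun k => c k * R ^ k)
    {t : ℝ} (ht : 0 ≤ t) (htR : t < R) : Summable fun k : ℕ => (k : ℝ) * c k * t ^ (k - 1) := by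
  refine (hR.div_const (R - t)).of_nonneg_of_le (fun k => by have := hc k; positivity)
    fun k => ?_
  rw [le_div_iff₀ (sub_pos.2 htR)]
  have := nat_mul_pow_sub_one_mul_le_pow_sub_pow ht htR.le k
  have := pow_nonneg ht k
  have := hc k
  nlinarith

theorem continuousOn_powSumDeriv (hc : ∀ k, 0 ≤ c k) (hR : Summable fun k => c k * R ^ k)
    {S : ℝ} (hS : 0 ≤ S) (hSR : S < R) : ContinuousOn (powSumDeriv c) (Icc 0 S) :=
  continuousOn_tsum (fun k => (continuous_const.mul (continuous_pow _)).continuousOn)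
    (summable_nat_mul_mul_pow_sub_one hc hR hS hSR) fun k t ht => by
      rw [Real.norm_of_nonneg (by have := hc k; have := ht.1; positivity)]
      exact mul_le_mul_of_nonneg_left (pow_le_pow_left₀ ht.1 ht.2 _) (by have := hc k; positivity)

theorem powSum_sub_le_powSumDeriv_mul (hc : ∀ k, 0 ≤ c k) {u v : ℝ} (hu : 0 ≤ u) (huv : u ≤ v)
    (hv : Summable fun k => c k * v ^ k)
    (hv' : Summable fun k : ℕ => (k : ℝ) * c k * v ^ (k - 1)) :
    powSum c v - powSum c u ≤ powSumDeriv c v * (v - u) := by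
  rw [powSum, powSum, ← hv.tsum_sub (summable_mul_pow_of_le hc hv hu huv), powSumDeriv,
    ← tsum_mul_right]
  refine Summable.tsum_le_tsum (fun k => ?_) (hv.sub (summable_mul_pow_of_le hc hv hu huv))
    (hv'.mul_right _)
  have := mul_le_mul_of_nonneg_left (pow_sub_pow_le_nat_mul_pow_sub_one_mul hu huv k) (hc k)
  linarith

theorem powSumDeriv_mul_le_powSum_sub (hc : ∀ k, 0 ≤ c k) {u v : ℝ} (hu : 0 ≤ u) (huv : u ≤ v)
    (hv : Summable fun k => c k * v ^ k)
    (hu' : Summable fun k : ℕ => (k : ℝ) * c k * u ^ (k - 1)) :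
    powSumDeriv c u * (v - u) ≤ powSum c v - powSum c u := by
  rw [powSum, powSum, ← hv.tsum_sub (summable_mul_pow_of_le hc hv hu huv), powSumDeriv,
    ← tsum_mul_right]
  refine Summable.tsum_le_tsum (fun k => ?_) (hu'.mul_right _)
    (hv.sub (summable_mul_pow_of_le hc hv hu huv))
  have := mul_le_mul_of_nonneg_left (nat_mul_pow_sub_one_mul_le_pow_sub_pow hu huv k) (hc k)
  linarith

end NonnegCoeff

section FunctionalEquation

variable {c a : ℕ → ℝ}

theorem mapsTo_powSum (ha : ∀ n, 0 ≤ a n) {x0 : ℝ} (hax0 : Summable fun n => a n * x0 ^ n) :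
    MapsTo (powSum a) (Icc 0 x0) (Icc 0 (powSum a x0)) := fun _ hx =>
  ⟨powSum_nonneg ha hx.1, monotoneOn_powSum ha hax0 hx ⟨hx.1.trans hx.2, le_rfl⟩ hx.2⟩

theorem powSum_eq_mul_powSum_of_forall_lt (hc : ∀ k, 0 ≤ c k) (ha : ∀ n, 0 ≤ a n) {x0 : ℝ}
    (hx0 : 0 < x0) (hax0 : Summable fun n => a n * x0 ^ n)
    (hcx0 : Summable fun k => c k * powSum a x0 ^ k)
    (heq : ∀ x, 0 ≤ x → x < x0 → powSum a x = x * powSum c (powSum a x)) :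
    powSum a x0 = x0 * powSum c (powSum a x0) := by
  have hy := continuousOn_powSum ha hax0
  have hFy := (continuousOn_powSum hc hcx0).comp hy (mapsTo_powSum ha hax0)
  exact Set.EqOn.of_subset_closure (s := Ico 0 x0) (fun x hx => heq x hx.1 hx.2) hy
    (continuousOn_id.mul hFy) Ico_subset_Icc_self (closure_Ico hx0.ne).ge ⟨hx0.le, le_rfl⟩

/-- Here `v - u = x' F(v) - x F(u) ≥ x (F(v) - F(u)) ≥ x F'(u) (v - u)`, and `u < v`. -/
theorem mul_powSumDeriv_le_one_of_eq (hc : ∀ k, 0 ≤ c k) (hc0 : 0 < c 0) {S x x' u v : ℝ}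
    (hcS : Summable fun k => c k * S ^ k) (hx : 0 ≤ x) (hxx' : x < x') (hu : 0 ≤ u)
    (huv : u ≤ v) (hvS : v < S) (hu_eq : u = x * powSum c u) (hv_eq : v = x' * powSum c v) :
    x * powSumDeriv c u ≤ 1 := by
  have hcv := summable_mul_pow_of_le hc hcS (hu.trans huv) hvS.le
  have hFu : 0 < powSum c u :=
    hc0.trans_le (coeff_zero_le_powSum hc hu (summable_mul_pow_of_le hc hcv hu huv))
  have hFuv : powSum c u ≤ powSum c v :=
    monotoneOn_powSum hc hcv ⟨hu, huv⟩ ⟨hu.trans huv, le_rfl⟩ huv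
  have hlt : u < v := by nlinarith
  have hsecant := powSumDeriv_mul_le_powSum_sub hc hu huv hcv
    (summable_nat_mul_mul_pow_sub_one hc hcS hu (huv.trans_lt hvS))
  have : x * powSumDeriv c u * (v - u) ≤ 1 * (v - u) := by
    nlinarith [mul_le_mul_of_nonneg_left hsecant hx]
  exact le_of_mul_le_mul_right this (sub_pos.2 hlt)

theorem mul_powSumDeriv_le_one (hc : ∀ k, 0 ≤ c k) (hc0 : 0 < c 0) (ha : ∀ n, 0 ≤ a n)
    {x0 S : ℝ} (hx0 : 0 < x0) (hax0 : Summable fun n => a n * x0 ^ n)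
    (hcS : Summable fun k => c k * S ^ k) (hS : powSum a x0 < S)
    (heq : ∀ x, 0 ≤ x → x < x0 → powSum a x = x * powSum c (powSum a x)) :
    x0 * powSumDeriv c (powSum a x0) ≤ 1 := by
  have hy := mapsTo_powSum ha hax0
  have hstep : ∀ x ∈ Ioo 0 x0, x * powSumDeriv c (powSum a x) ≤ 1 := fun x hx => by
    have hx' : (x + x0) / 2 ∈ Icc 0 x0 := ⟨by linarith [hx.1], by linarith [hx.2]⟩
    exact mul_powSumDeriv_le_one_of_eq hc hc0 hcS hx.1.le (by linarith [hx.2])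
      (hy ⟨hx.1.le, hx.2.le⟩).1
      (monotoneOn_powSum ha hax0 ⟨hx.1.le, hx.2.le⟩ hx' (by linarith [hx.2]))
      ((hy hx').2.trans_lt hS) (heq x hx.1.le hx.2) (heq _ hx'.1 (by linarith [hx.2]))
  have hG := (continuousOn_powSumDeriv hc hcS (powSum_nonneg ha hx0.le) hS).comp
    (continuousOn_powSum ha hax0) hy
  rw [← closure_Ioo hx0.ne] at hG
  exact le_on_closure hstep (continuousOn_id.mul hG) continuousOn_const
    (by rw [closure_Ioo hx0.ne]; exact ⟨hx0.le, le_rfl⟩)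

theorem exists_mul_powSum_lt (hc : ∀ k, 0 ≤ c k) {x0 Y0 S : ℝ} (hx0 : 0 ≤ x0) (hY0 : 0 ≤ Y0)
    (hS : Y0 < S) (hcS : Summable fun k => c k * S ^ k) (hfix : Y0 = x0 * powSum c Y0)
    (hlt : x0 * powSumDeriv c Y0 < 1) : ∃ Y ∈ Ioo Y0 S, x0 * powSum c Y < Y := by
  obtain ⟨Ym, hY0m, hYmS⟩ := exists_between hS
  have hGcont : ContinuousWithinAt (fun Y => x0 * powSumDeriv c Y) (Ioc Y0 Ym) Y0 :=
    ((continuousOn_powSumDeriv hc hcS (hY0.trans hY0m.le) hYmS).const_smul x0 Y0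
      ⟨hY0, hY0m.le⟩).mono fun Y hY => ⟨hY0.trans hY.1.le, hY.2⟩
  rw [ContinuousWithinAt, nhdsWithin_Ioc_eq_nhdsGT hY0m] at hGcont
  obtain ⟨Y, hYG, hYm⟩ := ((hGcont.eventually_lt_const hlt).and (Ioo_mem_nhdsGT hY0m)).exists
  refine ⟨Y, ⟨hYm.1, hYm.2.trans hYmS⟩, ?_⟩
  have hcY := summable_mul_pow_of_le hc hcS (hY0.trans hYm.1.le) (hYm.2.trans hYmS).le
  have hsecant := powSum_sub_le_powSumDeriv_mul hc hY0 hYm.1.le hcY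
    (summable_nat_mul_mul_pow_sub_one hc hcS (hY0.trans hYm.1.le) (hYm.2.trans hYmS))
  nlinarith [mul_le_mul_of_nonneg_left hsecant hx0, sub_pos.2 hYm.1]

/-- By `hrec`, the partial sums satisfy `Sₙ₊₁(x) ≤ x F(Sₙ(x))`, so they never pass `Y`. -/
theorem sum_range_mul_pow_le_of_mul_powSum_le (hc : ∀ k, 0 ≤ c k) (ha : ∀ n, 0 ≤ a n)
    (ha0 : a 0 = 0) (hrec : ∀ n, HasSum (fun k => c k * coeff n (mk a ^ k)) (a (n + 1)))
    {x Y : ℝ} (hx : 0 ≤ x) (hY : 0 ≤ Y) (hcY : Summable fun k => c k * Y ^ k)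
    (hxY : x * powSum c Y ≤ Y) (N : ℕ) : ∑ n ∈ range N, a n * x ^ n ≤ Y := by
  induction N with
  | zero => simpa using hY
  | succ N ih =>
    have hrow : HasSum (fun k => c k * ∑ n ∈ range N, coeff n (mk a ^ k) * x ^ n)
        (∑ n ∈ range N, a (n + 1) * x ^ n) := by
      simp only [mul_sum, ← mul_assoc]
      exact hasSum_sum fun n _ => (hrec n).mul_right (x ^ n)
    have hle : ∑ n ∈ range N, a (n + 1) * x ^ n ≤ powSum c Y := by
      refine hasSum_le (fun k => mul_le_mul_of_nonneg_left ?_ (hc k)) hrow hcY.hasSum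
      simp only [← coeff_mk_mul_pow_pow]
      exact (sum_range_coeff_mk_pow_le (fun n => by have := ha n; positivity) k N).trans
        (pow_le_pow_left₀ (sum_nonneg fun n _ => by have := ha n; positivity) ih k)
    calc ∑ n ∈ range (N + 1), a n * x ^ n = x * ∑ n ∈ range N, a (n + 1) * x ^ n := by
          rw [sum_range_succ', ha0, zero_mul, add_zero, mul_sum]
          exact sum_congr rfl fun n _ => by ring
      _ ≤ Y := (mul_le_mul_of_nonneg_left hle hx).trans hxY

theorem hasSum_prod_mul_coeff_mk_pow_mul_pow (hc : ∀ k, 0 ≤ c k) (ha : ∀ n, 0 ≤ a n) {x : ℝ}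
    (hx : 0 ≤ x) (hax : Summable fun n => a n * x ^ n)
    (hcx : Summable fun k => c k * powSum a x ^ k) :
    HasSum (fun p : ℕ × ℕ => c p.1 * coeff p.2 (mk a ^ p.1) * x ^ p.2)
      (powSum c (powSum a x)) := by
  have h := hasSum_mul_coeff_mk_pow hc (fun n => mul_nonneg (ha n) (pow_nonneg hx n)) hax hcx
  simp only [coeff_mk_mul_pow_pow, ← mul_assoc] at h
  exact h

/-- Both sides of `y(x) / x = F(y(x))` are power series on `(0, x0)`: compare coefficients. -/
theorem hasSum_mul_coeff_mk_pow_of_eq (hc : ∀ k, 0 ≤ c k) (ha : ∀ n, 0 ≤ a n) (ha0 : a 0 = 0)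
    {x0 : ℝ} (hx0 : 0 < x0) (hax0 : Summable fun n => a n * x0 ^ n)
    (hcx0 : Summable fun k => c k * powSum a x0 ^ k)
    (heq : ∀ x, 0 ≤ x → x < x0 → powSum a x = x * powSum c (powSum a x)) (n : ℕ) :
    HasSum (fun k => c k * coeff n (mk a ^ k)) (a (n + 1)) := by
  have hdouble : ∀ x ∈ Ioo 0 x0, HasSum
      (fun p : ℕ × ℕ => c p.1 * coeff p.2 (mk a ^ p.1) * x ^ p.2) (powSum c (powSum a x)) :=
    fun x hx => hasSum_prod_mul_coeff_mk_pow_mul_pow hc ha hx.1.le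
      (summable_mul_pow_of_le ha hax0 hx.1.le hx.2.le)
      (summable_mul_pow_of_le hc hcx0 (powSum_nonneg ha hx.1.le)
        (monotoneOn_powSum ha hax0 ⟨hx.1.le, hx.2.le⟩ ⟨hx0.le, le_rfl⟩ hx.2.le))
  have hr : x0 / 2 ∈ Ioo 0 x0 := ⟨by positivity, by linarith⟩
  have hcol : ∀ m, Summable fun k => c k * coeff m (mk a ^ k) := fun m =>
    (summable_mul_right_iff (pow_ne_zero m hr.1.ne')).1
      (((Equiv.prodComm ℕ ℕ).hasSum_iff.2 (hdouble _ hr)).summable.prod_factor m)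
  set b : ℕ → ℝ := fun m => ∑' k, c k * coeff m (mk a ^ k)
  have hb : ∀ x ∈ Ioo 0 x0, HasSum (fun m => b m * x ^ m) (powSum c (powSum a x)) :=
    fun x hx => ((Equiv.prodComm ℕ ℕ).hasSum_iff.2 (hdouble x hx)).prod_fiberwise
      fun m => (hcol m).hasSum.mul_right (x ^ m)
  have ha' : ∀ x ∈ Ioo 0 x0, HasSum (fun m => a (m + 1) * x ^ m) (powSum c (powSum a x)) :=
    fun x hx => by
      have h1 := (hasSum_nat_add_iff' 1).2 (summable_mul_pow_of_le ha hax0 hx.1.le hx.2.le).hasSum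
      simp only [sum_range_one, ha0, zero_mul, sub_zero] at h1
      have h2 := h1.mul_left x⁻¹
      have hterm : (fun m => x⁻¹ * (a (m + 1) * x ^ (m + 1))) = fun m => a (m + 1) * x ^ m := by
        funext m; rw [pow_succ]; field_simp [hx.1.ne']
      have hval : x⁻¹ * powSum a x = powSum c (powSum a x) :=
        ((eq_inv_mul_iff_mul_eq₀ hx.1.ne').2 (heq x hx.1.le hx.2).symm).symm
      change HasSum _ (x⁻¹ * powSum a x) at h2
      rwa [hterm, hval] at h2
  have hab : (fun m => a (m + 1)) = b := by
    refine eq_of_tsum_mul_pow_eq hr.1 ((ha' _ hr).summable.congr fun m => ?_)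
      ((hb _ hr).summable.congr fun m => ?_) fun x hx => ?_
    · rw [Real.norm_of_nonneg (ha _)]
    · rw [Real.norm_of_nonneg (tsum_nonneg fun k => mul_nonneg (hc k) (coeff_mk_pow_nonneg ha k m))]
    · have hx' : x ∈ Ioo 0 x0 := ⟨hx.1, hx.2.trans hr.2⟩
      exact (ha' x hx').tsum_eq.trans (hb x hx').tsum_eq.symm
  rw [show a (n + 1) = b n from congrFun hab n]
  exact (hcol n).hasSum

theorem one_le_mul_powSumDeriv (hc : ∀ k, 0 ≤ c k) (hc0 : 0 < c 0) (ha : ∀ n, 0 ≤ a n)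
    (ha0 : a 0 = 0) {x0 S : ℝ} (hx0 : 0 < x0)
    (hrad : ∀ x, x0 < x → ¬ Summable fun n => a n * x ^ n)
    (hax0 : Summable fun n => a n * x0 ^ n) (hcS : Summable fun k => c k * S ^ k)
    (hS : powSum a x0 < S)
    (heq : ∀ x, 0 ≤ x → x < x0 → powSum a x = x * powSum c (powSum a x)) :
    1 ≤ x0 * powSumDeriv c (powSum a x0) := by
  by_contra! hlt
  have hY0 := powSum_nonneg ha hx0.le
  have hcx0 := summable_mul_pow_of_le hc hcS hY0 hS.le
  obtain ⟨Y, hY, hxY⟩ := exists_mul_powSum_lt hc hx0.le hY0 hS hcS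
    (powSum_eq_mul_powSum_of_forall_lt hc ha hx0 hax0 hcx0 heq) hlt
  have hY' : 0 ≤ Y := hY0.trans hY.1.le
  have hcY := summable_mul_pow_of_le hc hcS hY' hY.2.le
  have hFY : 0 < powSum c Y := hc0.trans_le (coeff_zero_le_powSum hc hY' hcY)
  have hx1 : x0 < Y / powSum c Y := (lt_div_iff₀ hFY).2 hxY
  refine hrad _ hx1 (summable_of_sum_range_le (fun n => ?_)
    (sum_range_mul_pow_le_of_mul_powSum_le hc ha ha0
      (hasSum_mul_coeff_mk_pow_of_eq hc ha ha0 hx0 hax0 hcx0 heq) (hx0.trans hx1).le hY' hcY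
      (div_mul_cancel₀ _ hFY.ne').le))
  exact mul_nonneg (ha n) (pow_nonneg (hx0.trans hx1).le n)

end FunctionalEquation

theorem stmt_14_general (c a : ℕ → ℝ) (x0 Y0 : ℝ)
    (hc : ∀ k, 0 ≤ c k) (hc0 : 0 < c 0)
    (ha : ∀ n, 0 ≤ a n) (ha0 : a 0 = 0) (hx0 : 0 < x0)
    (hrad : ∀ x : ℝ, x0 < x → ¬ Summable fun n : ℕ => a n * x ^ n)
    (hsum0 : HasSum (fun n : ℕ => a n * x0 ^ n) Y0)
    (heq : ∀ x : ℝ, 0 ≤ x → x < x0 →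
      (∑' n : ℕ, a n * x ^ n) = x * ∑' k : ℕ, c k * (∑' n : ℕ, a n * x ^ n) ^ k)
    (hin : ∃ Y1 : ℝ, Y0 < Y1 ∧ Summable fun k : ℕ => c k * Y1 ^ k) :
    1 - x0 * ∑' k : ℕ, (k : ℝ) * c k * Y0 ^ (k - 1) = 0 := by
  obtain ⟨Y1, hY01, hcY1⟩ := hin
  obtain rfl : powSum a x0 = Y0 := hsum0.tsum_eq
  have hle := mul_powSumDeriv_le_one hc hc0 ha hx0 hsum0.summable hcY1 hY01 heq
  have hge := one_le_mul_powSumDeriv hc hc0 ha ha0 hx0 hrad hsum0.summable hcY1 hY01 heq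
  change 1 - x0 * powSumDeriv c (powSum a x0) = 0
  linarith

/-- Characteristic equation at the dominant singularity: let `F(y) = ∑ c_k y^k` have
non-negative coefficients with `c_0 > 0` and `c_j > 0` for some `j ≥ 2`, and let
`y(x) = ∑ a_n x^n` (non-negative coefficients, `a_0 = 0`) solve `y = x·F(y)` on `[0, x0)`,
where `x0` is the radius of convergence. If `Y0 = y(x0)` is finite and lies strictly inside
the region of convergence of `F`, then `1 - x0·F'(Y0) = 0`. -/
theorem stmt_14 (c a : ℕ → ℝ) (x0 Y0 : ℝ)
    (hc : ∀ k, 0 ≤ c k) (hc0 : 0 < c 0) (hcj : ∃ j, 2 ≤ j ∧ 0 < c j)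
    (ha : ∀ n, 0 ≤ a n) (ha0 : a 0 = 0) (hx0 : 0 < x0)
    (hrad : ∀ x : ℝ, x0 < x → ¬ Summable fun n : ℕ => a n * x ^ n)
    (hsum0 : HasSum (fun n : ℕ => a n * x0 ^ n) Y0)
    (heq : ∀ x : ℝ, 0 ≤ x → x < x0 →
      (∑' n : ℕ, a n * x ^ n) = x * ∑' k : ℕ, c k * (∑' n : ℕ, a n * x ^ n) ^ k)
    (hin : ∃ Y1 : ℝ, Y0 < Y1 ∧ Summable fun k : ℕ => c k * Y1 ^ k) :
    1 - x0 * ∑' k : ℕ, (k : ℝ) * c k * Y0 ^ (k - 1) = 0 :=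
  stmt_14_general c a x0 Y0 hc hc0 ha ha0 hx0 hrad hsum0 heq hin
end
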